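/- Let λ be a Young diagram and k₁, k₂ ∈ ℤ. Set ρ(λ) = Σ_{(i,j)∈λ, i≠j} (i·k₁ + j·k₂) + Σ_{((i,j),(l,k))∈λ×λ, 1+i−j+k−l≠0} ((i−l+1)·k₁ + (j−k)·k₂) + Σ_{((i,j),(l,k))∈λ×λ, i−j+k−l≠0} ((i−l)·k₁ + (j−k)·k₂). Then (−1)^{ρ(λ) + |λ|(k₁+k₂)} · σ(λ)^{k₁+k₂} = (−1)^{|λ|·k₂ + n(λ)·k₁ + n(λ̄)·k₂}. -/

import Mathlib

/-- The sign `σ(μ) ∈ {±1}`: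
`σ(μ) = ∏_{(i,j)∈μ, i≠j} sgn(j−i)
  · ∏_{((i,j),(l,k))∈μ×μ, 1+i−j+k−l≠0} sgn(1+i−j+k−l)
  · ∏_{((i,j),(l,k))∈μ×μ, i−j+k−l≠0} sgn(i−j+k−l)`. -/
def youngSigma (μ : YoungDiagram) : ℤ :=
  (∏ c ∈ μ.cells.filter (fun c => c.1 ≠ c.2), ((c.2 : ℤ) - c.1).sign)
  * (∏ p ∈ (μ.cells ×ˢ μ.cells).filter
      (fun p => (1 : ℤ) + p.1.1 - p.1.2 + p.2.2 - p.2.1 ≠ 0),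
      ((1 : ℤ) + p.1.1 - p.1.2 + p.2.2 - p.2.1).sign)
  * (∏ p ∈ (μ.cells ×ˢ μ.cells).filter
      (fun p => (p.1.1 : ℤ) - p.1.2 + p.2.2 - p.2.1 ≠ 0),
      ((p.1.1 : ℤ) - p.1.2 + p.2.2 - p.2.1).sign)

/-- The integer
`ρ(μ) = Σ_{(i,j)∈μ, i≠j} (i·k₁ + j·k₂)
  + Σ_{((i,j),(l,k))∈μ×μ, 1+i−j+k−l≠0} ((i−l+1)·k₁ + (j−k)·k₂)
  + Σ_{((i,j),(l,k))∈μ×μ, i−j+k−l≠0} ((i−l)·k₁ + (j−k)·k₂)`. -/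
def youngRho (μ : YoungDiagram) (k₁ k₂ : ℤ) : ℤ :=
  (∑ c ∈ μ.cells.filter (fun c => c.1 ≠ c.2), ((c.1 : ℤ) * k₁ + (c.2 : ℤ) * k₂))
  + (∑ p ∈ (μ.cells ×ˢ μ.cells).filter
      (fun p => (1 : ℤ) + p.1.1 - p.1.2 + p.2.2 - p.2.1 ≠ 0),
      (((p.1.1 : ℤ) - p.2.1 + 1) * k₁ + ((p.1.2 : ℤ) - p.2.2) * k₂))
  + (∑ p ∈ (μ.cells ×ˢ μ.cells).filter
      (fun p => (p.1.1 : ℤ) - p.1.2 + p.2.2 - p.2.1 ≠ 0),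
      (((p.1.1 : ℤ) - p.2.1) * k₁ + ((p.1.2 : ℤ) - p.2.2) * k₂))

/-!
Counting negative factors writes `σ(λ) = (-1)^N`. Put `δ = c(q) - c(p)` for the content
difference `c = j - i` of a pair of cells: the two pair products count `δ < -1` and `δ < 0`, so
`N` is congruent to the number of cells below the main diagonal plus the number of "adjacent"
pairs, those with `δ = -1`. In `ρ` the antisymmetric sums over swap-invariant sets of pairs vanish,
which leaves a closed form; the two exponents then differ, modulo 2, by `(k₁ + k₂)` times
`#{cells below the diagonal} + Σ_{adjacent (p, q)} (i_p - i_q) + Σ_{diagonal cells} i`.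

That this is even is seen diagonal by diagonal. The cells of content `c` fill an interval of rows
of some length `m_c`, and lengths of neighbouring diagonals differ by at most one. The sum over
adjacent pairs then telescopes with potential `C(m + 1, 3)`, and what remains is
`Σ_{c < 0} (m_c - m_c m_{c+1} + C(m_{c+1}, 2) - C(m_c, 2))`, a sum of even terms.
-/

open Finset

lemma prod_sign_filter_ne_zero {α : Type*} (s : Finset α) (f : α → ℤ) :
    ∏ x ∈ s with f x ≠ 0, (f x).sign = (-1) ^ #{x ∈ s | f x < 0} := by
  have hsign : ∀ x ∈ s.filter (f · ≠ 0), (f x).sign = if f x < 0 then -1 else 1 := by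
    intro x hx
    have := (mem_filter.1 hx).2
    split_ifs with h
    exacts [Int.sign_eq_neg_one_of_neg h, Int.sign_eq_one_of_pos (by omega)]
  rw [prod_congr rfl hsign, prod_ite, prod_const, prod_const, one_pow, mul_one, filter_filter]
  congr 2
  exact filter_congr fun x _ => by omega

lemma sum_sub_eq_zero_of_swap_mem {α M : Type*} [AddCommGroup M] {s : Finset (α × α)}
    (hs : ∀ p ∈ s, p.swap ∈ s) (w : α → M) : ∑ p ∈ s, (w p.1 - w p.2) = 0 := by
  rw [sum_sub_distrib, sub_eq_zero]
  exact sum_nbij' Prod.swap Prod.swap hs hs (by simp) (by simp) (by simp)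

lemma sum_sub_mul_add_sub_mul_eq_zero {s : Finset ((ℕ × ℕ) × (ℕ × ℕ))}
    (hs : ∀ p ∈ s, p.swap ∈ s) (k₁ k₂ : ℤ) :
    ∑ p ∈ s, (((p.1.1 : ℤ) - p.2.1) * k₁ + ((p.1.2 : ℤ) - p.2.2) * k₂) = 0 :=
  (sum_congr rfl fun _ _ => by ring).trans
    (sum_sub_eq_zero_of_swap_mem hs fun c : ℕ × ℕ => (c.1 : ℤ) * k₁ + c.2 * k₂)

lemma sum_filter_fst_ne_snd (s : Finset (ℕ × ℕ)) (k₁ k₂ : ℤ) :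
    ∑ c ∈ s with c.1 ≠ c.2, ((c.1 : ℤ) * k₁ + c.2 * k₂)
      = ∑ c ∈ s, ((c.1 : ℤ) * k₁ + c.2 * k₂) - (k₁ + k₂) * ∑ c ∈ s with c.1 = c.2, (c.1 : ℤ) := by
  have hdiag : ∑ c ∈ s with c.1 = c.2, ((c.1 : ℤ) * k₁ + c.2 * k₂)
      = ∑ c ∈ s with c.1 = c.2, (k₁ + k₂) * (c.1 : ℤ) :=
    sum_congr rfl fun c hc => by rw [(mem_filter.1 hc).2]; ring
  rw [← sum_filter_not_add_sum_filter s (fun c => c.1 = c.2), hdiag, mul_sum, add_sub_cancel_right]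

lemma Int.sum_Ico_sub {M : Type*} [AddCommGroup M] (f : ℤ → M) {a b : ℤ} (hab : a ≤ b) :
    ∑ c ∈ Ico a b, (f (c + 1) - f c) = f b - f a := by
  induction b, hab using Int.leInduction with
  | base => simp
  | succ b hab ih => rw [← sum_Ico_add_eq_sum_Ico_add_one hab, ih]; abel

lemma two_mul_choose_two (n : ℕ) : 2 * (n.choose 2 : ℤ) = n * (n - 1) := by
  induction n with
  | zero => simp
  | succ n ih => rw [Nat.choose_succ_succ', Nat.choose_one_right]; push_cast; linear_combination ih

lemma choose_two_succ (n : ℕ) : ((n + 1).choose 2 : ℤ) = n.choose 2 + n := by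
  rw [Nat.choose_succ_succ', Nat.choose_one_right]; push_cast; ring

lemma mul_choose_two_sub_mul_choose_two {m m' : ℕ} (h : m' = m + 1 ∨ m = m' + 1 ∨ m = m') :
    (m : ℤ) * m'.choose 2 - m' * m.choose 2 = (m' + 1).choose 3 - (m + 1).choose 3 := by
  have key (n : ℕ) : (n : ℤ) * (n + 1).choose 2 - (n + 1 : ℕ) * n.choose 2
      = (n + 1 + 1).choose 3 - (n + 1).choose 3 := by
    rw [Nat.choose_succ_succ' (n + 1) 2]
    push_cast
    rw [choose_two_succ]
    linear_combination -two_mul_choose_two n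
  rcases h with rfl | rfl | rfl
  · exact key m
  · linear_combination -key m'
  · ring

lemma even_sub_mul_add_choose_two_sub {m m' : ℕ} (h : m' = m ∨ m' = m + 1) :
    Even ((m : ℤ) - m * m' + (m'.choose 2 - m.choose 2)) := by
  have h' : (m : ℤ) - m * m' + (m'.choose 2 - m.choose 2) = -(m * (m - 1)) := by
    rcases h with rfl | rfl
    · ring
    · rw [choose_two_succ]; push_cast; ring
  rw [h']
  exact (Int.even_mul_pred_self _).neg

namespace YoungDiagram

variable (μ : YoungDiagram)

def content (p : ℕ × ℕ) : ℤ := (p.2 : ℤ) - p.1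

/-- The `t`-th cell, counted from the edge of the quadrant, on the diagonal of content `c`. -/
def diagCell (c : ℤ) (t : ℕ) : ℕ × ℕ := ((-c).toNat + t, c.toNat + t)

lemma content_diagCell (c : ℤ) (t : ℕ) : content (diagCell c t) = c := by
  simp only [content, diagCell]; omega

lemma diagCell_injective (c : ℤ) : Function.Injective (diagCell c) :=
  fun t s h => by simpa [diagCell] using congrArg Prod.fst h

lemma diagCell_content_min (p : ℕ × ℕ) : diagCell (content p) (min p.1 p.2) = p := by
  ext <;> simp only [diagCell, content] <;> omega

lemma exists_add_lt : ∃ B : ℕ, ∀ p ∈ μ, p.1 + p.2 < B :=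
  ⟨μ.cells.sup (fun p => p.1 + p.2) + 1,
    fun _ hp => Nat.lt_succ_of_le (le_sup (f := fun p => p.1 + p.2) hp)⟩

lemma exists_diagCell_notMem (c : ℤ) : ∃ t, diagCell c t ∉ μ := by
  obtain ⟨B, hB⟩ := μ.exists_add_lt
  exact ⟨B, fun h => by have := hB _ h; simp only [diagCell] at this; omega⟩

def diagLen (c : ℤ) : ℕ := Nat.find (μ.exists_diagCell_notMem c)

lemma diagCell_mem_iff {c : ℤ} {t : ℕ} : diagCell c t ∈ μ ↔ t < μ.diagLen c := by
  have hlen : diagCell c (μ.diagLen c) ∉ μ := Nat.find_spec (μ.exists_diagCell_notMem c)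
  refine ⟨fun h => ?_, fun h => not_not.1 (Nat.find_min _ h)⟩
  by_contra! hle
  exact hlen (μ.up_left_mem (by omega) (by omega) h)

lemma diagLen_le_of_mem {c c' : ℤ} {k : ℕ} (h : ∀ t, diagCell c (t + k) ∈ μ → diagCell c' t ∈ μ) :
    μ.diagLen c ≤ μ.diagLen c' + k := by
  by_contra! hlt
  have := μ.diagCell_mem_iff.1 (h _ (μ.diagCell_mem_iff.2 (by omega)))
  omega

-- A cell's left and upper neighbours lie on the two diagonals next to its own.
lemma diagLen_step_of_neg {c : ℤ} (hc : c < 0) :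
    μ.diagLen c ≤ μ.diagLen (c + 1) ∧ μ.diagLen (c + 1) ≤ μ.diagLen c + 1 := by
  constructor
  · simpa using μ.diagLen_le_of_mem (c := c) (c' := c + 1) (k := 0) fun t h =>
      μ.up_left_mem (by omega) (by omega) h
  · exact μ.diagLen_le_of_mem fun t h =>
      μ.up_left_mem (by omega) (by omega) h

lemma diagLen_step_of_nonneg {c : ℤ} (hc : 0 ≤ c) :
    μ.diagLen (c + 1) ≤ μ.diagLen c ∧ μ.diagLen c ≤ μ.diagLen (c + 1) + 1 := by
  constructor
  · simpa using μ.diagLen_le_of_mem (c := c + 1) (c' := c) (k := 0) fun t h =>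
      μ.up_left_mem (by omega) (by omega) h
  · exact μ.diagLen_le_of_mem fun t h =>
      μ.up_left_mem (by omega) (by omega) h

lemma diagLen_eq_zero {B : ℕ} (hB : ∀ p ∈ μ, p.1 + p.2 < B) {c : ℤ} (hc : B ≤ c.natAbs) :
    μ.diagLen c = 0 := by
  by_contra h
  have := hB _ ((μ.diagCell_mem_iff (t := 0)).2 (Nat.pos_of_ne_zero h))
  simp only [diagCell] at this
  omega

def diag (c : ℤ) : Finset (ℕ × ℕ) := {p ∈ μ.cells | content p = c}

lemma diag_eq_image (c : ℤ) : μ.diag c = (range (μ.diagLen c)).image (diagCell c) := by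
  ext p
  simp only [diag, mem_filter, mem_cells, mem_image, mem_range]
  constructor
  · rintro ⟨hp, rfl⟩
    exact ⟨_, μ.diagCell_mem_iff.1 ((diagCell_content_min p).symm ▸ hp), diagCell_content_min p⟩
  · rintro ⟨t, ht, rfl⟩
    exact ⟨μ.diagCell_mem_iff.2 ht, content_diagCell c t⟩

lemma card_diag (c : ℤ) : #(μ.diag c) = μ.diagLen c := by
  rw [diag_eq_image, card_image_of_injective _ (diagCell_injective c), card_range]

lemma sum_fst_diag (c : ℤ) :
    ∑ p ∈ μ.diag c, (p.1 : ℤ) = (-c).toNat * μ.diagLen c + (μ.diagLen c).choose 2 := by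
  rw [diag_eq_image, sum_image fun _ _ _ _ h => diagCell_injective c h]
  simp only [diagCell, Nat.cast_add, sum_add_distrib, sum_const, card_range, nsmul_eq_mul]
  rw [← Nat.cast_sum, sum_range_id, Nat.choose_two_right]
  ring

lemma sum_diag_succ_product_sub (c : ℤ) :
    ∑ x ∈ μ.diag (c + 1) ×ˢ μ.diag c, ((x.1.1 : ℤ) - x.2.1)
      = ((μ.diagLen (c + 1) + 1).choose 3 : ℤ) - (μ.diagLen c + 1).choose 3
        - if c < 0 then (μ.diagLen c : ℤ) * μ.diagLen (c + 1) else 0 := by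
  have hprod : ∑ x ∈ μ.diag (c + 1) ×ˢ μ.diag c, ((x.1.1 : ℤ) - x.2.1)
      = μ.diagLen c * ∑ p ∈ μ.diag (c + 1), (p.1 : ℤ)
        - μ.diagLen (c + 1) * ∑ p ∈ μ.diag c, (p.1 : ℤ) := by
    simp only [sum_product, sum_sub_distrib, sum_const, card_diag, nsmul_eq_mul, mul_sum]
  rw [hprod, sum_fst_diag, sum_fst_diag]
  split_ifs with hc
  · obtain ⟨h₁, h₂⟩ := μ.diagLen_step_of_neg hc
    have := mul_choose_two_sub_mul_choose_two (m := μ.diagLen c) (m' := μ.diagLen (c + 1))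
      (by omega)
    rw [show ((-(c + 1)).toNat : ℤ) = -c - 1 by omega, show ((-c).toNat : ℤ) = -c by omega]
    linear_combination this
  · obtain ⟨h₁, h₂⟩ := μ.diagLen_step_of_nonneg (not_lt.1 hc)
    have := mul_choose_two_sub_mul_choose_two (m := μ.diagLen c) (m' := μ.diagLen (c + 1))
      (by omega)
    rw [show ((-(c + 1)).toNat : ℤ) = 0 by omega, show ((-c).toNat : ℤ) = 0 by omega]
    linear_combination this

def adjPairs : Finset ((ℕ × ℕ) × (ℕ × ℕ)) :=
  {p ∈ μ.cells ×ˢ μ.cells | content p.1 = content p.2 + 1}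

lemma content_mem_Ico {B : ℕ} (hB : ∀ p ∈ μ, p.1 + p.2 < B) {p : ℕ × ℕ} (hp : p ∈ μ) :
    content p ∈ Ico (-(B : ℤ)) B := by
  have := hB p hp
  simp only [content, mem_Ico]
  omega

lemma card_filter_lt_eq_sum_diagLen {B : ℕ} (hB : ∀ p ∈ μ, p.1 + p.2 < B) :
    (#{p ∈ μ.cells | p.2 < p.1} : ℤ) = ∑ c ∈ Ico (-(B : ℤ)) 0, (μ.diagLen c : ℤ) := by
  rw [card_eq_sum_card_fiberwise (f := content) (t := Ico (-(B : ℤ)) 0)]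
  · push_cast
    refine sum_congr rfl fun c hc => ?_
    rw [← card_diag, diag, filter_filter]
    congr 2
    refine filter_congr fun p _ => ?_
    simp only [content, mem_Ico] at hc ⊢
    omega
  · intro p hp
    have := μ.content_mem_Ico hB (mem_filter.1 hp).1
    simp only [coe_filter, Set.mem_ofPred_eq, mem_coe, content, mem_Ico] at hp this ⊢
    omega

lemma filter_adjPairs_content_snd_eq (c : ℤ) :
    {p ∈ μ.adjPairs | content p.2 = c} = μ.diag (c + 1) ×ˢ μ.diag c := by
  ext p
  simp only [adjPairs, diag, mem_filter, mem_product]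
  constructor
  · rintro ⟨⟨⟨h₁, h₂⟩, h⟩, rfl⟩
    exact ⟨⟨h₁, h⟩, h₂, rfl⟩
  · rintro ⟨⟨h₁, h⟩, h₂, rfl⟩
    exact ⟨⟨⟨h₁, h₂⟩, h⟩, rfl⟩

lemma sum_adjPairs_eq {B : ℕ} (hB : ∀ p ∈ μ, p.1 + p.2 < B) :
    ∑ p ∈ μ.adjPairs, ((p.1.1 : ℤ) - p.2.1)
      = -∑ c ∈ Ico (-(B : ℤ)) 0, (μ.diagLen c : ℤ) * μ.diagLen (c + 1) := by
  rw [← sum_fiberwise_of_maps_to (s := μ.adjPairs) (g := fun p => content p.2)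
    (t := Ico (-(B : ℤ)) B) fun p hp => μ.content_mem_Ico hB (mem_product.1 (mem_filter.1 hp).1).2]
  simp only [filter_adjPairs_content_snd_eq]
  rw [sum_congr rfl fun c _ => μ.sum_diag_succ_product_sub c, sum_sub_distrib,
    Int.sum_Ico_sub (fun c => ((μ.diagLen c + 1).choose 3 : ℤ)) (by omega),
    μ.diagLen_eq_zero hB (c := B) (by omega), μ.diagLen_eq_zero hB (c := -B) (by omega),
    sub_self, zero_sub, sum_ite, sum_const_zero, add_zero, Ico_filter_lt, min_eq_right (by omega)]

lemma sum_filter_fst_eq_snd {B : ℕ} (hB : ∀ p ∈ μ, p.1 + p.2 < B) :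
    ∑ p ∈ μ.cells with p.1 = p.2, (p.1 : ℤ)
      = ∑ c ∈ Ico (-(B : ℤ)) 0, (((μ.diagLen (c + 1)).choose 2 : ℤ) - (μ.diagLen c).choose 2) := by
  rw [Int.sum_Ico_sub (fun c => ((μ.diagLen c).choose 2 : ℤ)) (by omega),
    μ.diagLen_eq_zero hB (c := -B) (by omega),
    filter_congr (q := fun p => content p = 0) fun p _ => by simp only [content]; omega]
  rw [← diag, sum_fst_diag]
  simp

theorem even_card_filter_lt_add_sum_adjPairs_add_sum_filter_eq :
    Even ((#{p ∈ μ.cells | p.2 < p.1} : ℤ) + ∑ p ∈ μ.adjPairs, ((p.1.1 : ℤ) - p.2.1)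
      + ∑ p ∈ μ.cells with p.1 = p.2, (p.1 : ℤ)) := by
  obtain ⟨B, hB⟩ := μ.exists_add_lt
  rw [μ.card_filter_lt_eq_sum_diagLen hB, μ.sum_adjPairs_eq hB, μ.sum_filter_fst_eq_snd hB,
    ← sum_neg_distrib, ← sum_add_distrib, ← sum_add_distrib]
  refine even_sum _ fun c hc => ?_
  have := μ.diagLen_step_of_neg (mem_Ico.1 hc).2
  simpa [sub_eq_add_neg, add_assoc] using
    even_sub_mul_add_choose_two_sub (m := μ.diagLen c) (m' := μ.diagLen (c + 1)) (by omega)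

lemma youngSigma_eq :
    youngSigma μ = (-1) ^ (#{c ∈ μ.cells | c.2 < c.1} + #μ.adjPairs) := by
  have hdiag : ∏ c ∈ μ.cells with c.1 ≠ c.2, ((c.2 : ℤ) - c.1).sign
      = (-1) ^ #{c ∈ μ.cells | c.2 < c.1} := by
    rw [filter_congr (q := fun c => (c.2 : ℤ) - c.1 ≠ 0) (fun _ _ => by omega),
      prod_sign_filter_ne_zero]
    congr 2
    exact filter_congr fun _ _ => by omega
  have hcount : #{p ∈ μ.cells ×ˢ μ.cells | (p.1.1 : ℤ) - p.1.2 + p.2.2 - p.2.1 < 0}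
      = #{p ∈ μ.cells ×ˢ μ.cells | (1 : ℤ) + p.1.1 - p.1.2 + p.2.2 - p.2.1 < 0} + #μ.adjPairs := by
    rw [← card_filter_add_card_filter_not (fun p : (ℕ × ℕ) × (ℕ × ℕ) =>
      (1 : ℤ) + p.1.1 - p.1.2 + p.2.2 - p.2.1 < 0), filter_filter, filter_filter, adjPairs]
    congr 2
    · exact filter_congr fun _ _ => by omega
    · exact filter_congr fun _ _ => by simp only [content]; omega
  unfold youngSigma
  rw [hdiag, prod_sign_filter_ne_zero, prod_sign_filter_ne_zero, hcount, ← pow_add, ← pow_add,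
    show ∀ a b c : ℕ, a + b + (b + c) = a + c + 2 * b by intros; ring, pow_add, pow_mul]
  simp

lemma sum_nonadjacent_eq (k₁ k₂ : ℤ) :
    ∑ p ∈ μ.cells ×ˢ μ.cells with (1 : ℤ) + p.1.1 - p.1.2 + p.2.2 - p.2.1 ≠ 0,
        (((p.1.1 : ℤ) - p.2.1 + 1) * k₁ + ((p.1.2 : ℤ) - p.2.2) * k₂)
      = (μ.card : ℤ) ^ 2 * k₁ - (k₁ + k₂) * ∑ p ∈ μ.adjPairs, ((p.1.1 : ℤ) - p.2.1 + 1) := by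
  have hall : ∑ p ∈ μ.cells ×ˢ μ.cells,
      (((p.1.1 : ℤ) - p.2.1 + 1) * k₁ + ((p.1.2 : ℤ) - p.2.2) * k₂) = (μ.card : ℤ) ^ 2 * k₁ := by
    rw [sum_congr rfl fun p _ => show ((p.1.1 : ℤ) - p.2.1 + 1) * k₁ + ((p.1.2 : ℤ) - p.2.2) * k₂
          = ((p.1.1 : ℤ) - p.2.1) * k₁ + ((p.1.2 : ℤ) - p.2.2) * k₂ + k₁ by ring,
      sum_add_distrib, sum_const, card_product, nsmul_eq_mul,
      sum_sub_mul_add_sub_mul_eq_zero fun p hp => mem_product.2 (mem_product.1 hp).symm, zero_add]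
    push_cast
    ring
  have hadj : ∑ p ∈ μ.cells ×ˢ μ.cells with ¬((1 : ℤ) + p.1.1 - p.1.2 + p.2.2 - p.2.1 ≠ 0),
        (((p.1.1 : ℤ) - p.2.1 + 1) * k₁ + ((p.1.2 : ℤ) - p.2.2) * k₂)
      = (k₁ + k₂) * ∑ p ∈ μ.adjPairs, ((p.1.1 : ℤ) - p.2.1 + 1) := by
    rw [mul_sum, adjPairs]
    refine sum_congr (filter_congr fun p _ => by simp only [content]; omega) fun p hp => ?_
    have hp := (mem_filter.1 hp).2
    simp only [content] at hp
    rw [show (p.1.2 : ℤ) - p.2.2 = p.1.1 - p.2.1 + 1 by omega]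
    ring
  rw [eq_sub_iff_add_eq, ← hadj, sum_filter_add_sum_filter_not, hall]

lemma youngRho_eq (k₁ k₂ : ℤ) :
    youngRho μ k₁ k₂ = (∑ c ∈ μ.cells, (c.1 : ℤ)) * k₁ + (∑ c ∈ μ.cells, (c.2 : ℤ)) * k₂
      + (μ.card : ℤ) ^ 2 * k₁ - (k₁ + k₂) * (∑ c ∈ μ.cells with c.1 = c.2, (c.1 : ℤ)
        + ∑ p ∈ μ.adjPairs, ((p.1.1 : ℤ) - p.2.1 + 1)) := by
  unfold youngRho
  rw [sum_filter_fst_ne_snd, sum_nonadjacent_eq, sum_sub_mul_add_sub_mul_eq_zero]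
  · simp only [sum_add_distrib, ← sum_mul]
    ring
  · intro p hp
    simp only [mem_filter, mem_product, Prod.fst_swap, Prod.snd_swap] at hp ⊢
    exact ⟨⟨hp.1.2, hp.1.1⟩, by omega⟩

lemma sum_fst_transpose : ∑ c ∈ μ.transpose.cells, (c.1 : ℤ) = ∑ c ∈ μ.cells, (c.2 : ℤ) :=
  sum_equiv (Equiv.prodComm _ _) (by simp) (by simp)

end YoungDiagram

/-- **Lemma (sign of the leading term).** For a Young diagram `μ` and `k₁, k₂ ∈ ℤ`,
`(−1)^{ρ(μ) + |μ|(k₁+k₂)} · σ(μ)^{k₁+k₂} = (−1)^{|μ|·k₂ + n(μ)·k₁ + n(μ̄)·k₂}`,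
where `n(μ) = Σ_{(i,j)∈μ} i` and `μ̄` is the conjugate partition. -/
theorem youngDiagram_leading_sign (μ : YoungDiagram) (k₁ k₂ : ℤ) :
    ((-1 : ℚ) ^ (youngRho μ k₁ k₂ + (μ.card : ℤ) * (k₁ + k₂)))
        * ((youngSigma μ : ℚ) ^ (k₁ + k₂))
      = (-1 : ℚ) ^ ((μ.card : ℤ) * k₂ + (∑ c ∈ μ.cells, (c.1 : ℤ)) * k₁
          + (∑ c ∈ μ.transpose.cells, (c.1 : ℤ)) * k₂) := by
  have hσ : (youngSigma μ : ℚ) = (-1) ^ ((#{c ∈ μ.cells | c.2 < c.1} + #μ.adjPairs : ℕ) : ℤ) := by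
    rw [μ.youngSigma_eq, zpow_natCast]
    push_cast
    rfl
  rw [hσ, ← zpow_mul, ← zpow_add₀ (by norm_num), μ.youngRho_eq, μ.sum_fst_transpose,
    ← Int.cast_negOnePow, ← Int.cast_negOnePow, (Int.negOnePow_eq_iff _ _).2]
  obtain ⟨r, hr⟩ := μ.even_card_filter_lt_add_sum_adjPairs_add_sum_filter_eq
  obtain ⟨s, hs⟩ := Int.even_mul_succ_self μ.card
  rw [sum_add_distrib, sum_const, nsmul_one]
  refine ⟨s * k₁ + (k₁ + k₂) * (r - ∑ c ∈ μ.cells with c.1 = c.2, (c.1 : ℤ)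
    - ∑ p ∈ μ.adjPairs, ((p.1.1 : ℤ) - p.2.1)), ?_⟩
  push_cast
  linear_combination k₁ * hs + (k₁ + k₂) * hr
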